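/- For objects T₁, T₂ of an abelian category A and integers m, n ≥ 1, one has ⟨T₁⟩ₘ ⋄ ⟨T₂⟩ₙ ⊆ ⟨T₁ ⊕ T₂⟩ₘ₊ₙ. -/

import Mathlib

open CategoryTheory CategoryTheory.Limits

attribute [local instance] CategoryTheory.Abelian.hasFiniteBiproducts

universe v u

variable {A : Type u} [Category.{v} A] [Abelian A]

/-- The objects that are direct summands of finite direct sums of objects from `S`. -/
def addClosure (S : Set A) : Set A :=
  {X | ∃ (n : ℕ) (f : Fin n → A) (Y : A),
    (∀ i, f i ∈ S) ∧ Nonempty ((X ⊞ Y) ≅ ⨁ f)}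

/-- The operator `U ⋄ V`: the additive closure of the middle terms of short exact
sequences with outer terms in `U` and `V`. -/
def diamondSet (U V : Set A) : Set A :=
  addClosure {X | ∃ S : ShortComplex A,
    S.ShortExact ∧ S.X₂ = X ∧ S.X₁ ∈ U ∧ S.X₃ ∈ V}

/-- The filtration `⟨S⟩ₙ`. -/
def bracket (S : Set A) : ℕ → Set A
  | 0 => {X | IsZero X}
  | 1 => addClosure S
  | n + 2 => diamondSet (addClosure S) (bracket S (n + 1))

/-- The extension dimension of an abelian category. -/
noncomputable def extDim (A : Type u) [Category.{v} A] [Abelian A] : ℕ∞ :=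
  sInf {n : ℕ∞ | ∃ (k : ℕ) (T : A), (k : ℕ∞) = n ∧ bracket {T} (k + 1) = Set.univ}

/-- `ClassRes P n X` : there is an exact sequence `0 → Pₙ → ⋯ → P₀ → X → 0` with all `Pᵢ ∈ P`. -/
def ClassRes (P : Set A) : ℕ → A → Prop
  | 0, X => X ∈ P
  | n + 1, X => ∃ S : ShortComplex A,
      S.ShortExact ∧ S.X₃ = X ∧ S.X₂ ∈ P ∧ ClassRes P n S.X₁

/-- `ClassCores I n X` : there is an exact sequence `0 → X → I₀ → ⋯ → Iₙ → 0` with all `Iᵢ ∈ I`. -/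
def ClassCores (I : Set A) : ℕ → A → Prop
  | 0, X => X ∈ I
  | n + 1, X => ∃ S : ShortComplex A,
      S.ShortExact ∧ S.X₁ = X ∧ S.X₂ ∈ I ∧ ClassCores I n S.X₃

/-!
Each `Tᵢ` is a summand of `T₁ ⊞ T₂`, so `⟨Tᵢ⟩ₖ ⊆ ⟨T₁ ⊞ T₂⟩ₖ`, and it suffices to show
`⟨T⟩ₘ ⋄ ⟨T⟩ₙ ⊆ ⟨T⟩ₘ₊ₙ`. By induction on `m` this follows from the associativity
`(U ⋄ V) ⋄ W ⊆ U ⋄ (V ⋄ W)` for classes closed under isomorphisms, zero objects and finite sums.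
For single extensions this is Noether's isomorphism theorem: for monos `X ↪ B ↪ E` the quotient
`E/X` sits in `0 → B/X → E/X → E/B → 0`. Summands are handled by adding the trivial extension
`0 → D → D → 0 → 0`, which replaces the kernel `B` of an extension by `B ⊞ D`.
-/

section Biproducts

variable {C : Type*} [Category C] [HasZeroMorphisms C]

lemma isZero_biproduct_of_isEmpty {J : Type*} [IsEmpty J] (f : J → C) [HasBiproduct f] :
    IsZero (⨁ f) :=
  (IsZero.iff_id_eq_zero _).2 (biproduct.hom_ext' _ _ isEmptyElim)

variable [HasBinaryBiproducts C]

noncomputable def biprodInterchange (W X Y Z : C) : (W ⊞ X) ⊞ (Y ⊞ Z) ≅ (W ⊞ Y) ⊞ (X ⊞ Z) :=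
  biprod.associator W X (Y ⊞ Z) ≪≫
    biprod.mapIso (Iso.refl W) ((biprod.associator X Y Z).symm ≪≫
      biprod.mapIso (biprod.braiding X Y) (Iso.refl Z) ≪≫ biprod.associator Y X Z) ≪≫
    (biprod.associator W Y (X ⊞ Z)).symm

variable [HasFiniteBiproducts C]

noncomputable def biproductFinSuccIso {n : ℕ} (f : Fin (n + 1) → C) :
    ⨁ f ≅ f 0 ⊞ ⨁ fun i : Fin n => f i.succ :=
  (biproduct.isLimit f).conePointUniqueUpToIso
    (extendFanIsLimit f (biproduct.isLimit _) (BinaryBiproduct.isLimit _ _))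

noncomputable def biproductSumElimIso {J K : Type} [Finite J] [Finite K] (f : J → C)
    (g : K → C) : ⨁ Sum.elim f g ≅ (⨁ f) ⊞ ⨁ g :=
  (biproduct.isLimit _).conePointUniqueUpToIso
    (Fan.combPairIsLimit (biproduct.isLimit f) (biproduct.isLimit g)
      (BinaryBiproduct.isLimit _ _))

end Biproducts

structure IsAdditiveClass (P : Set A) : Prop where
  mem_of_iso {X Y : A} : (X ≅ Y) → X ∈ P → Y ∈ P
  mem_of_isZero {X : A} : IsZero X → X ∈ P
  biprod_mem {X Y : A} : X ∈ P → Y ∈ P → (X ⊞ Y) ∈ P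

lemma IsAdditiveClass.biproduct_mem {P : Set A} (hP : IsAdditiveClass P) :
    ∀ {n : ℕ} (f : Fin n → A), (∀ i, f i ∈ P) → (⨁ f) ∈ P
  | 0, f, _ => hP.mem_of_isZero (isZero_biproduct_of_isEmpty f)
  | _ + 1, f, hf => hP.mem_of_iso (biproductFinSuccIso f).symm
      (hP.biprod_mem (hf 0) (hP.biproduct_mem _ fun i => hf i.succ))

section AddClosure

open ZeroObject

variable {S : Set A}

lemma addClosure_mono {S' : Set A} (h : S ⊆ S') : addClosure S ⊆ addClosure S' :=
  fun _ ⟨n, f, Y, hf, he⟩ => ⟨n, f, Y, fun i => h (hf i), he⟩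

lemma subset_addClosure : S ⊆ addClosure S := fun X hX =>
  ⟨1, fun _ => X, 0, fun _ => hX,
    ⟨(isoBiprodZero (isZero_zero A)).symm ≪≫ (biproductUniqueIso fun _ : Fin 1 => X).symm⟩⟩

lemma mem_addClosure_of_biprod_left {X Y : A} (h : (X ⊞ Y) ∈ addClosure S) :
    X ∈ addClosure S := by
  obtain ⟨n, f, Y', hf, ⟨e⟩⟩ := h
  exact ⟨n, f, Y ⊞ Y', hf, ⟨(biprod.associator X Y Y').symm ≪≫ e⟩⟩

lemma isAdditiveClass_addClosure (S : Set A) : IsAdditiveClass (addClosure S) where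
  mem_of_iso e := fun ⟨n, f, Y, hf, ⟨e'⟩⟩ =>
    ⟨n, f, Y, hf, ⟨biprod.mapIso e.symm (Iso.refl Y) ≪≫ e'⟩⟩
  mem_of_isZero {X} hX := ⟨0, Fin.elim0, X, fun i => i.elim0,
    ⟨((biprod_isZero_iff X X).2 ⟨hX, hX⟩).iso (isZero_biproduct_of_isEmpty _)⟩⟩
  biprod_mem := by
    rintro X X' ⟨k, f, Y, hf, ⟨e⟩⟩ ⟨l, g, Y', hg, ⟨e'⟩⟩
    refine ⟨k + l, Sum.elim f g ∘ finSumFinEquiv.symm, Y ⊞ Y', fun i =>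
      (Sum.forall.2 ⟨hf, hg⟩ : ∀ j, Sum.elim f g j ∈ S) _,
      ⟨biprodInterchange X X' Y Y' ≪≫ biprod.mapIso e e' ≪≫ (biproductSumElimIso f g).symm ≪≫
        (biproduct.reindex finSumFinEquiv.symm _).symm⟩⟩

lemma mem_addClosure_of_biprod_right {X Y : A} (h : (X ⊞ Y) ∈ addClosure S) :
    Y ∈ addClosure S :=
  mem_addClosure_of_biprod_left
    ((isAdditiveClass_addClosure S).mem_of_iso (biprod.braiding X Y) h)

lemma addClosure_subset_addClosure {P : Set A} (h : S ⊆ addClosure P) :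
    addClosure S ⊆ addClosure P := by
  rintro X ⟨n, f, Y, hf, ⟨e⟩⟩
  have hP := isAdditiveClass_addClosure P
  exact mem_addClosure_of_biprod_left
    (hP.mem_of_iso e.symm (hP.biproduct_mem f fun i => h (hf i)))

lemma IsAdditiveClass.exists_biprod_mem {P : Set A} (hP : IsAdditiveClass P) {X : A}
    (hX : X ∈ addClosure P) : ∃ Y, (X ⊞ Y) ∈ P := by
  obtain ⟨n, f, Y, hf, ⟨e⟩⟩ := hX
  exact ⟨Y, hP.mem_of_iso e.symm (hP.biproduct_mem f hf)⟩

end AddClosure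

section ShortExact

open ZeroObject

lemma shortExact_id_zero (D : A) :
    (ShortComplex.mk (𝟙 D) (0 : D ⟶ 0) comp_zero).ShortExact :=
  .mk' ((ShortComplex.exact_iff_epi _ rfl).2 inferInstance) inferInstance inferInstance

lemma CategoryTheory.ShortComplex.ShortExact.biprod_map {S₁ S₂ : ShortComplex A}
    (h₁ : S₁.ShortExact) (h₂ : S₂.ShortExact) :
    (ShortComplex.mk (biprod.map S₁.f S₂.f) (biprod.map S₁.g S₂.g)
      (by ext <;> simp)).ShortExact := by
  have := h₁.mono_f; have := h₂.mono_f; have := h₁.epi_g; have := h₂.epi_g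
  refine .mk' (ShortComplex.exact_of_f_is_kernel _ ?_) inferInstance inferInstance
  refine KernelFork.IsLimit.ofι' _ _ fun t ht => ?_
  obtain ⟨l₁, hl₁⟩ := KernelFork.IsLimit.lift' h₁.fIsKernel (t ≫ biprod.fst)
    (by simpa using ht =≫ biprod.fst)
  obtain ⟨l₂, hl₂⟩ := KernelFork.IsLimit.lift' h₂.fIsKernel (t ≫ biprod.snd)
    (by simpa using ht =≫ biprod.snd)
  exact ⟨biprod.lift l₁ l₂, biprod.hom_ext _ _ (by simpa using hl₁) (by simpa using hl₂)⟩

lemma CategoryTheory.ShortComplex.shortExact_cokernel_map_comp {X Y Z : A} (f : X ⟶ Y)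
    (g : Y ⟶ Z) [Mono g] :
    (ShortComplex.mk (cokernel.map f (f ≫ g) (𝟙 _) g (by simp))
      (cokernel.map (f ≫ g) g f (𝟙 _) (by simp)) (by ext; simp)).ShortExact := by
  have hexact := kernelCokernelCompSequence_exact f g
  -- the connecting map `ker g ⟶ coker f` vanishes since `g` is mono
  refine .mk' (hexact.exact 3) ((hexact.exact 2).mono_g ?_)
    (inferInstanceAs (Epi ((kernelCokernelCompSequence f g).map' 4 5)))
  exact (isZero_kernel_of_mono g).eq_of_src _ _

end ShortExact

-- `diamondSet U V` is `addClosure (extensions U V)` by definition.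
def extensions (U V : Set A) : Set A :=
  {X | ∃ S : ShortComplex A, S.ShortExact ∧ S.X₂ = X ∧ S.X₁ ∈ U ∧ S.X₃ ∈ V}

section Extensions

variable {U V W : Set A}

lemma extensions_mono {U' V' : Set A} (hU : U ⊆ U') (hV : V ⊆ V') :
    extensions U V ⊆ extensions U' V' :=
  fun _ ⟨S, hS, hX, h₁, h₃⟩ => ⟨S, hS, hX, hU h₁, hV h₃⟩

lemma diamondSet_mono {U' V' : Set A} (hU : U ⊆ U') (hV : V ⊆ V') :
    diamondSet U V ⊆ diamondSet U' V' :=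
  addClosure_mono (extensions_mono hU hV)

open ZeroObject in
lemma isAdditiveClass_extensions (hU : IsAdditiveClass U) (hV : IsAdditiveClass V) :
    IsAdditiveClass (extensions U V) where
  mem_of_iso := by
    rintro _ X e ⟨S, hS, rfl, h₁, h₃⟩
    refine ⟨.mk (S.f ≫ e.hom) (e.inv ≫ S.g) (by simp), ShortComplex.shortExact_of_iso
      (ShortComplex.isoMk (S₁ := S) (Iso.refl _) e (Iso.refl _) (by simp) (by simp)) hS,
      rfl, h₁, h₃⟩
  mem_of_isZero {X} hX :=
    ⟨_, shortExact_id_zero X, rfl, hU.mem_of_isZero hX, hV.mem_of_isZero (isZero_zero A)⟩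
  biprod_mem := by
    rintro _ _ ⟨S₁, h₁, rfl, hU₁, hV₁⟩ ⟨S₂, h₂, rfl, hU₂, hV₂⟩
    exact ⟨_, h₁.biprod_map h₂, rfl, hU.biprod_mem hU₁ hU₂, hV.biprod_mem hV₁ hV₂⟩

lemma extensions_extensions_subset (hV : ∀ {X Y : A}, (X ≅ Y) → X ∈ V → Y ∈ V)
    (hW : ∀ {X Y : A}, (X ≅ Y) → X ∈ W → Y ∈ W) :
    extensions (extensions U V) W ⊆ extensions U (extensions V W) := by
  rintro _ ⟨⟨i, p, w⟩, hT, rfl, ⟨S, hS, hB, hU₁, hV₃⟩, hW₃⟩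
  subst hB
  have := hS.mono_f
  have := hT.mono_f
  refine ⟨.mk (S.f ≫ i) (cokernel.π _) (cokernel.condition _),
    { exact := ShortComplex.exact_cokernel _ }, rfl, hU₁,
    ⟨_, ShortComplex.shortExact_cokernel_map_comp S.f i, rfl, hV ?_ hV₃, hW ?_ hW₃⟩⟩
  · exact (cokernelIsCokernel S.f).coconePointUniqueUpToIso hS.gIsCokernel |>.symm
  · exact (cokernelIsCokernel _).coconePointUniqueUpToIso hT.gIsCokernel |>.symm

open ZeroObject in
lemma extensions_addClosure_subset {P : Set A} (hP : IsAdditiveClass P)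
    (hW : IsAdditiveClass W) :
    extensions (addClosure P) W ⊆ addClosure (extensions P W) := by
  rintro _ ⟨S, hS, rfl, h₁, h₃⟩
  obtain ⟨D, hD⟩ := hP.exists_biprod_mem h₁
  exact mem_addClosure_of_biprod_left (Y := D) (subset_addClosure
    ⟨_, hS.biprod_map (shortExact_id_zero D), rfl, hD,
      hW.biprod_mem h₃ (hW.mem_of_isZero (isZero_zero A))⟩)

lemma diamondSet_assoc (hU : IsAdditiveClass U) (hV : IsAdditiveClass V)
    (hW : IsAdditiveClass W) :
    diamondSet (diamondSet U V) W ⊆ diamondSet U (diamondSet V W) :=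
  calc addClosure (extensions (addClosure (extensions U V)) W)
    _ ⊆ addClosure (addClosure (extensions (extensions U V) W)) :=
      addClosure_mono (extensions_addClosure_subset (isAdditiveClass_extensions hU hV) hW)
    _ ⊆ addClosure (extensions (extensions U V) W) := addClosure_subset_addClosure subset_rfl
    _ ⊆ addClosure (extensions U (extensions V W)) :=
      addClosure_mono (extensions_extensions_subset hV.mem_of_iso hW.mem_of_iso)
    _ ⊆ diamondSet U (diamondSet V W) := diamondSet_mono subset_rfl subset_addClosure

end Extensions

section Bracket

variable (S : Set A)

lemma bracket_succ {n : ℕ} (hn : n ≠ 0) :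
    bracket S (n + 1) = diamondSet (addClosure S) (bracket S n) := by
  obtain ⟨k, rfl⟩ := Nat.exists_eq_succ_of_ne_zero hn
  rfl

lemma isAdditiveClass_bracket {n : ℕ} (hn : n ≠ 0) : IsAdditiveClass (bracket S n) := by
  obtain ⟨_ | k, rfl⟩ := Nat.exists_eq_succ_of_ne_zero hn
  exacts [isAdditiveClass_addClosure S, isAdditiveClass_addClosure _]

lemma diamondSet_bracket_subset {m n : ℕ} (hm : 1 ≤ m) (hn : 1 ≤ n) :
    diamondSet (bracket S m) (bracket S n) ⊆ bracket S (m + n) := by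
  induction m, hm using Nat.le_induction with
  | base => rw [add_comm, bracket_succ S (n := n) (by omega)]; rfl
  | succ m hm ih =>
    rw [bracket_succ S (n := m) (by omega), add_right_comm,
      bracket_succ S (n := m + n) (by omega)]
    exact (diamondSet_assoc (isAdditiveClass_addClosure S) (isAdditiveClass_bracket S (by omega))
      (isAdditiveClass_bracket S (by omega))).trans (diamondSet_mono subset_rfl ih)

variable {S}

lemma bracket_subset_bracket {S' : Set A} (h : S ⊆ addClosure S') :
    ∀ n, bracket S n ⊆ bracket S' n
  | 0 => subset_rfl
  | 1 => addClosure_subset_addClosure h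
  | n + 2 =>
    diamondSet_mono (addClosure_subset_addClosure h) (bracket_subset_bracket h (n + 1))

end Bracket

/-- `⟨T₁⟩ₘ ⋄ ⟨T₂⟩ₙ ⊆ ⟨T₁ ⊕ T₂⟩ₘ₊ₙ` for `m, n ≥ 1`. -/
theorem diamond_bracket_subset (T₁ T₂ : A) (m n : ℕ) (hm : 1 ≤ m) (hn : 1 ≤ n) :
    diamondSet (bracket {T₁} m) (bracket {T₂} n) ⊆ bracket {T₁ ⊞ T₂} (m + n) := by
  have hT : (T₁ ⊞ T₂) ∈ addClosure {T₁ ⊞ T₂} := subset_addClosure rfl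
  have h₁ : bracket {T₁} m ⊆ bracket {T₁ ⊞ T₂} m :=
    bracket_subset_bracket (Set.singleton_subset_iff.2 (mem_addClosure_of_biprod_left hT)) m
  have h₂ : bracket {T₂} n ⊆ bracket {T₁ ⊞ T₂} n :=
    bracket_subset_bracket (Set.singleton_subset_iff.2 (mem_addClosure_of_biprod_right hT)) n
  exact (diamondSet_mono h₁ h₂).trans (diamondSet_bracket_subset _ hm hn)
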